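/- (Lorentzian bootstrap.) Let f ∈ ℝ[x₁, …, x_n] be homogeneous of degree d ≥ 2 and let x ∈ ℝⁿ have all coordinates positive. Suppose that: (1) the Hessian H_x f is weakly nonnegative (all off-diagonal entries nonnegative) and irreducible (the graph on {1, …, n} with an edge between distinct i, j whenever (H_x f)_{ij} ≠ 0 is connected); (2) ∂_i f(x) > 0 for all i; and (3) for every i, the Hessian H_x(∂_i f) has exactly one positive eigenvalue counted with multiplicity. Then H_x f has exactly one positive eigenvalue counted with multiplicity. -/

import Mathlib

open Matrix MvPolynomial

/-- The gradient of a polynomial `f ∈ ℝ[x₁,…,xₙ]` evaluated at `x ∈ ℝⁿ`. -/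
noncomputable def gradAt {n : ℕ} (f : MvPolynomial (Fin n) ℝ) (x : Fin n → ℝ) : Fin n → ℝ :=
  fun i => MvPolynomial.eval x (MvPolynomial.pderiv i f)

/-- The Hessian matrix of a polynomial `f ∈ ℝ[x₁,…,xₙ]` evaluated at `x ∈ ℝⁿ`. -/
noncomputable def hessAt {n : ℕ} (f : MvPolynomial (Fin n) ℝ) (x : Fin n → ℝ) :
    Matrix (Fin n) (Fin n) ℝ :=
  Matrix.of fun i j => MvPolynomial.eval x (MvPolynomial.pderiv i (MvPolynomial.pderiv j f))

open RealInnerProductSpace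

lemma my_pderiv_comm {n : ℕ} (i j : Fin n) (f : MvPolynomial (Fin n) ℝ) :
    pderiv i (pderiv j f) = pderiv j (pderiv i f) := by
  have h1 : ∀ a b c : Fin n, pderiv a (pderiv b (X c : MvPolynomial (Fin n) ℝ)) = 0 := by
    intro a b c
    rcases eq_or_ne c b with rfl | h
    · simp [pderiv_X_self]
    · simp [pderiv_X_of_ne h]
  induction f using MvPolynomial.induction_on with
  | C a => simp
  | add f g hf hg => simp [hf, hg]
  | mul_X f k hf => simp only [pderiv_mul, map_add, hf, h1]; ring

lemma degree_eq_sum_univ {n : ℕ} (v : Fin n →₀ ℕ) :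
    Finsupp.degree v = ∑ j : Fin n, v j :=
  Finset.sum_subset (Finset.subset_univ _) fun i _ hi => Finsupp.notMem_support_iff.mp hi

lemma X_mul_pderiv_monomial {n : ℕ} (i : Fin n) (s : Fin n →₀ ℕ) (a : ℝ) :
    (X i : MvPolynomial (Fin n) ℝ) * pderiv i (monomial s a) = monomial s ((s i : ℝ) * a) := by
  rw [pderiv_monomial]
  by_cases h : s i = 0
  · simp [h]
  · have hs : Finsupp.single i 1 + (s - Finsupp.single i 1) = s := by
      ext j
      rcases eq_or_ne j i with rfl | hj
      · simp [Nat.add_sub_cancel' (Nat.one_le_iff_ne_zero.2 h)]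
      · simp [Finsupp.single_apply, Ne.symm hj, hj]
    rw [X, monomial_mul, one_mul, hs, mul_comm]

lemma sum_univ_eq_of_homog {n m : ℕ} {g : MvPolynomial (Fin n) ℝ} (hg : g.IsHomogeneous m)
    {v : Fin n →₀ ℕ} (hv : v ∈ g.support) : ∑ j : Fin n, v j = m := by
  have h := hg (mem_support_iff.mp hv)
  have h2 : Finsupp.degree v = m := by
    rw [Finsupp.degree_eq_weight_one]; exact h
  rw [← degree_eq_sum_univ]; exact h2

lemma euler_key {n m : ℕ} (g : MvPolynomial (Fin n) ℝ) (hg : g.IsHomogeneous m) :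
    ∑ i : Fin n, (X i : MvPolynomial (Fin n) ℝ) * pderiv i g = C (m : ℝ) * g := by
  calc ∑ i : Fin n, (X i : MvPolynomial (Fin n) ℝ) * pderiv i g
      = ∑ i : Fin n, ∑ v ∈ g.support, (X i : MvPolynomial (Fin n) ℝ) *
          pderiv i (monomial v (coeff v g)) := by
        refine Finset.sum_congr rfl fun i _ => ?_
        conv_lhs => rw [g.as_sum]
        rw [map_sum, Finset.mul_sum]
    _ = ∑ v ∈ g.support, ∑ i : Fin n, monomial v ((v i : ℝ) * coeff v g) := by
        rw [Finset.sum_comm]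
        exact Finset.sum_congr rfl fun v _ => Finset.sum_congr rfl fun i _ =>
          X_mul_pderiv_monomial i v (coeff v g)
    _ = ∑ v ∈ g.support, monomial v ((m : ℝ) * coeff v g) := by
        refine Finset.sum_congr rfl fun v hv => ?_
        rw [← map_sum, ← Finset.sum_mul, ← Nat.cast_sum, sum_univ_eq_of_homog hg hv]
    _ = C (m : ℝ) * g := by
        conv_rhs => rw [g.as_sum]
        rw [Finset.mul_sum]
        exact Finset.sum_congr rfl fun v _ => (C_mul_monomial).symm

lemma euler_eval {n m : ℕ} (g : MvPolynomial (Fin n) ℝ) (hg : g.IsHomogeneous m)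
    (x : Fin n → ℝ) :
    ∑ i : Fin n, x i * eval x (pderiv i g) = m * eval x g := by
  have := congrArg (eval x) (euler_key g hg)
  simpa [map_sum, eval_mul, eval_X, eval_C] using this

lemma isHomog_pderiv {n m : ℕ} {g : MvPolynomial (Fin n) ℝ} (hg : g.IsHomogeneous m)
    (i : Fin n) : (pderiv i g).IsHomogeneous (m - 1) := by
  have hrepr : pderiv i g =
      ∑ v ∈ g.support, monomial (v - Finsupp.single i 1) (coeff v g * (v i : ℝ)) := by
    conv_lhs => rw [g.as_sum]
    rw [map_sum]
    exact Finset.sum_congr rfl fun v _ => pderiv_monomial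
  rw [hrepr]
  apply IsHomogeneous.sum
  intro v hv
  by_cases h : v i = 0
  · rw [h]
    simpa using isHomogeneous_zero (Fin n) ℝ (m - 1)
  · apply isHomogeneous_monomial
    have hsum : ∑ j : Fin n, v j = m := sum_univ_eq_of_homog hg hv
    set w : Fin n →₀ ℕ := v - Finsupp.single i 1 with hw
    have hpt : ∀ j, w j + Finsupp.single i 1 j = v j := by
      intro j
      rcases eq_or_ne j i with rfl | hj
      · simp [hw, Nat.sub_add_cancel (Nat.one_le_iff_ne_zero.2 h)]
      · simp [hw, Finsupp.single_apply, Ne.symm hj]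
    have h1 : ∑ j : Fin n, (Finsupp.single i (1:ℕ)) j = 1 := by
      simp [Finsupp.single_apply]
    have key : (∑ j : Fin n, w j) + 1 = m := by
      calc (∑ j : Fin n, w j) + 1
          = ∑ j : Fin n, (w j + Finsupp.single i 1 j) := by
            rw [Finset.sum_add_distrib, h1]
        _ = ∑ j : Fin n, v j := Finset.sum_congr rfl fun j _ => hpt j
        _ = m := hsum
    rw [degree_eq_sum_univ]
    omega

lemma pderiv_eq_zero_of_homog_zero {n : ℕ} {g : MvPolynomial (Fin n) ℝ}
    (hg : g.IsHomogeneous 0) (j : Fin n) : pderiv j g = 0 := by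
  conv_lhs => rw [g.as_sum]
  rw [map_sum]
  refine Finset.sum_eq_zero fun v hv => ?_
  have hv0 : v = 0 := by
    have := sum_univ_eq_of_homog hg hv
    have : Finsupp.degree v = 0 := by rw [degree_eq_sum_univ]; exact this
    exact (Finsupp.degree_eq_zero_iff v).mp this
  subst hv0
  simp [pderiv_monomial]

section MatHelpers
variable {n : ℕ} {A : Matrix (Fin n) (Fin n) ℝ}


lemma eigbasis_dot (hA : A.IsHermitian) (k l : Fin n) :
    ⇑(hA.eigenvectorBasis k) ⬝ᵥ ⇑(hA.eigenvectorBasis l) = if k = l then 1 else 0 := by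
  have := orthonormal_iff_ite.mp hA.eigenvectorBasis.orthonormal k l
  rw [PiLp.inner_apply] at this
  rw [dotProduct_comm]
  simpa [dotProduct, RCLike.inner_apply, conj_trivial] using this

lemma coe_sum_repr (hA : A.IsHermitian) (w : Fin n → ℝ) :
    ∑ k, (⇑(hA.eigenvectorBasis k) ⬝ᵥ w) • ⇑(hA.eigenvectorBasis k) = w := by
  have h := hA.eigenvectorBasis.sum_repr' (WithLp.toLp 2 w)
  have hik : ∀ k : Fin n, (inner ℝ (hA.eigenvectorBasis k) (WithLp.toLp 2 w) : ℝ)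
      = ⇑(hA.eigenvectorBasis k) ⬝ᵥ w := by
    intro k
    rw [PiLp.inner_apply]
    simp [dotProduct, RCLike.inner_apply, conj_trivial, mul_comm]
  calc ∑ k, (⇑(hA.eigenvectorBasis k) ⬝ᵥ w) • ⇑(hA.eigenvectorBasis k)
      = ∑ k, (inner ℝ (hA.eigenvectorBasis k) (WithLp.toLp 2 w) : ℝ)
          • ⇑(hA.eigenvectorBasis k) := by
        refine Finset.sum_congr rfl fun k _ => ?_
        rw [hik]
    _ = w := by
        have := congrArg (fun v : EuclideanSpace ℝ (Fin n) => (v : Fin n → ℝ)) h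
        simpa using this

lemma dotProduct_sum' {ι : Type*} (w : Fin n → ℝ) (s : Finset ι) (v : ι → Fin n → ℝ) :
    w ⬝ᵥ (∑ k ∈ s, v k) = ∑ k ∈ s, w ⬝ᵥ v k := by
  simp only [dotProduct, Finset.sum_apply, Finset.mul_sum]
  exact Finset.sum_comm

lemma mulVec_sum' {ι : Type*} (A : Matrix (Fin n) (Fin n) ℝ) (s : Finset ι)
    (v : ι → Fin n → ℝ) : A *ᵥ (∑ k ∈ s, v k) = ∑ k ∈ s, A *ᵥ v k := by
  ext i
  simp only [Matrix.mulVec, Finset.sum_apply]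
  exact dotProduct_sum' _ s v

lemma quadform_expand (hA : A.IsHermitian) (w : Fin n → ℝ) :
    w ⬝ᵥ (A *ᵥ w) = ∑ k, hA.eigenvalues k * (⇑(hA.eigenvectorBasis k) ⬝ᵥ w) ^ 2 := by
  have hexp : A *ᵥ w = ∑ k, ((⇑(hA.eigenvectorBasis k) ⬝ᵥ w) * hA.eigenvalues k)
      • ⇑(hA.eigenvectorBasis k) := by
    conv_lhs => rw [← coe_sum_repr hA w]
    rw [mulVec_sum']
    refine Finset.sum_congr rfl fun k _ => ?_
    rw [Matrix.mulVec_smul, hA.mulVec_eigenvectorBasis, smul_smul]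
  rw [hexp, dotProduct_sum']
  refine Finset.sum_congr rfl fun k _ => ?_
  rw [dotProduct_smul, dotProduct_comm]
  simp only [smul_eq_mul]
  ring

lemma dot_mulVec_symm (hA : A.IsHermitian) (v w : Fin n → ℝ) :
    v ⬝ᵥ (A *ᵥ w) = w ⬝ᵥ (A *ᵥ v) := by
  have hsym : ∀ i j, A i j = A j i := by
    intro i j
    have := congrFun (congrFun hA j) i
    simpa [Matrix.conjTranspose_apply] using this
  simp only [dotProduct, Matrix.mulVec, Finset.mul_sum]
  rw [Finset.sum_comm]
  refine Finset.sum_congr rfl fun i _ => Finset.sum_congr rfl fun j _ => ?_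
  rw [hsym j i]; ring

lemma eig_rayleigh (hA : A.IsHermitian) (k : Fin n) :
    ⇑(hA.eigenvectorBasis k) ⬝ᵥ (A *ᵥ ⇑(hA.eigenvectorBasis k)) = hA.eigenvalues k := by
  rw [hA.mulVec_eigenvectorBasis, dotProduct_smul]
  simp [eigbasis_dot hA k k]

lemma exists_halfspace (hA : A.IsHermitian)
    (h : ∀ k l, 0 < hA.eigenvalues k → 0 < hA.eigenvalues l → k = l) :
    ∃ u : Fin n → ℝ, ∀ z : Fin n → ℝ, u ⬝ᵥ z = 0 → z ⬝ᵥ (A *ᵥ z) ≤ 0 := by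
  by_cases hex : ∃ k, 0 < hA.eigenvalues k
  · obtain ⟨k0, hk0⟩ := hex
    refine ⟨⇑(hA.eigenvectorBasis k0), fun z hz => ?_⟩
    rw [quadform_expand hA z]
    refine Finset.sum_nonpos fun k _ => ?_
    rcases eq_or_ne k k0 with rfl | hne
    · rw [hz]
      simp
    · have hk : hA.eigenvalues k ≤ 0 := by
        by_contra hpos
        exact hne (h k k0 (not_le.mp hpos) hk0)
      exact mul_nonpos_of_nonpos_of_nonneg hk (sq_nonneg _)
  · push_neg at hex
    refine ⟨0, fun z _ => ?_⟩
    rw [quadform_expand hA z]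
    exact Finset.sum_nonpos fun k _ =>
      mul_nonpos_of_nonpos_of_nonneg (hex k) (sq_nonneg _)

lemma count_one (hA : A.IsHermitian) (u : Fin n → ℝ)
    (hu : ∀ z : Fin n → ℝ, u ⬝ᵥ z = 0 → z ⬝ᵥ (A *ᵥ z) ≤ 0)
    (w : Fin n → ℝ) (hw : 0 < w ⬝ᵥ (A *ᵥ w)) :
    (Finset.univ.filter fun k => 0 < hA.eigenvalues k).card = 1 := by
  have hex : ∃ k, 0 < hA.eigenvalues k := by
    by_contra hno
    push_neg at hno
    have : w ⬝ᵥ (A *ᵥ w) ≤ 0 := by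
      rw [quadform_expand hA w]
      exact Finset.sum_nonpos fun k _ =>
        mul_nonpos_of_nonpos_of_nonneg (hno k) (sq_nonneg _)
    linarith
  obtain ⟨k0, hk0⟩ := hex
  have hbk : ∀ k, 0 < hA.eigenvalues k → u ⬝ᵥ ⇑(hA.eigenvectorBasis k) ≠ 0 := by
    intro k hk h0
    have := hu _ h0
    rw [eig_rayleigh hA k] at this
    linarith
  have huniq : ∀ k, 0 < hA.eigenvalues k → k = k0 := by
    intro k hk
    by_contra hne
    set c0 := u ⬝ᵥ ⇑(hA.eigenvectorBasis k0) with hc0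
    set ck := u ⬝ᵥ ⇑(hA.eigenvectorBasis k) with hck
    set z : Fin n → ℝ := c0 • ⇑(hA.eigenvectorBasis k) - ck • ⇑(hA.eigenvectorBasis k0) with hzdef
    have hz : u ⬝ᵥ z = 0 := by
      rw [hzdef, dotProduct_sub, dotProduct_smul, dotProduct_smul,
        ← hc0, ← hck]
      simp only [smul_eq_mul]
      ring
    have hq := hu z hz
    have hval : z ⬝ᵥ (A *ᵥ z) = c0 ^ 2 * hA.eigenvalues k + ck ^ 2 * hA.eigenvalues k0 := by
      rw [hzdef]
      simp only [Matrix.mulVec_sub, Matrix.mulVec_smul, hA.mulVec_eigenvectorBasis,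
        sub_dotProduct, smul_dotProduct, dotProduct_sub,
        dotProduct_smul, smul_eq_mul, eigbasis_dot hA, hne, Ne.symm hne,
        if_true, if_false, eq_self_iff_true]
      ring
    have hc0ne := hbk k0 hk0
    have hckne := hbk k hk
    have h1 : 0 < ck ^ 2 * hA.eigenvalues k0 := by positivity
    have h2 : 0 ≤ c0 ^ 2 * hA.eigenvalues k := by positivity
    rw [hval] at hq
    linarith
  rw [Finset.card_eq_one]
  refine ⟨k0, ?_⟩
  ext k
  simp only [Finset.mem_filter, Finset.mem_univ, true_and, Finset.mem_singleton]
  exact ⟨fun h => huniq k h, fun h => h ▸ hk0⟩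

lemma revCS (hA : A.IsHermitian) (u : Fin n → ℝ)
    (hu : ∀ z : Fin n → ℝ, u ⬝ᵥ z = 0 → z ⬝ᵥ (A *ᵥ z) ≤ 0)
    (v w : Fin n → ℝ) (hv : 0 < v ⬝ᵥ (A *ᵥ v)) :
    (v ⬝ᵥ (A *ᵥ v)) * (w ⬝ᵥ (A *ᵥ w)) ≤ (v ⬝ᵥ (A *ᵥ w)) ^ 2 := by
  have hb : u ⬝ᵥ v ≠ 0 := fun h => absurd (hu v h) (not_le.2 hv)
  set p := v ⬝ᵥ (A *ᵥ v) with hp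
  set t := v ⬝ᵥ (A *ᵥ w) with ht
  set q := w ⬝ᵥ (A *ᵥ w) with hq
  set a := u ⬝ᵥ w with ha
  set s := u ⬝ᵥ v with hs
  set z : Fin n → ℝ := a • v - s • w with hzdef
  have hz : u ⬝ᵥ z = 0 := by
    rw [hzdef, dotProduct_sub, dotProduct_smul, dotProduct_smul, ← ha, ← hs]
    simp only [smul_eq_mul]
    ring
  have hQz := hu z hz
  have hval : z ⬝ᵥ (A *ᵥ z) = a ^ 2 * p - 2 * a * s * t + s ^ 2 * q := by
    rw [hzdef, Matrix.mulVec_sub, Matrix.mulVec_smul, Matrix.mulVec_smul,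
      sub_dotProduct, smul_dotProduct, smul_dotProduct,
      dotProduct_sub, dotProduct_sub, dotProduct_smul,
      dotProduct_smul, dotProduct_smul, dotProduct_smul]
    have hwv : w ⬝ᵥ (A *ᵥ v) = t := by rw [dot_mulVec_symm hA w v, ← ht]
    rw [hwv, ← hp, ← ht, ← hq]
    simp only [smul_eq_mul]
    ring
  rw [hval] at hQz
  have hs2 : 0 < s ^ 2 := by positivity
  nlinarith [sq_nonneg (a * p - s * t), mul_nonneg (le_of_lt hv) (neg_nonneg.mpr hQz)]
end MatHelpers

lemma hessAt_apply {n : ℕ} (f : MvPolynomial (Fin n) ℝ) (x : Fin n → ℝ) (i j : Fin n) :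
    hessAt f x i j = MvPolynomial.eval x (MvPolynomial.pderiv i (MvPolynomial.pderiv j f)) := rfl

lemma hessAt_isHermitian {n : ℕ} (g : MvPolynomial (Fin n) ℝ) (x : Fin n → ℝ) :
    (hessAt g x).IsHermitian := by
  apply Matrix.ext
  intro i j
  simp only [Matrix.conjTranspose_apply, hessAt_apply, star_trivial]
  rw [my_pderiv_comm]

lemma walk_const {n : ℕ} {G : SimpleGraph (Fin n)} {t : Fin n → ℝ}
    (hadj : ∀ a b, G.Adj a b → t a = t b) :
    ∀ {a b : Fin n}, G.Walk a b → t a = t b := by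
  intro a b p
  induction p with
  | nil => rfl
  | cons h p ih => exact (hadj _ _ h).trans ih

/-- Lorentzian bootstrap: let `f` be homogeneous of degree `d ≥ 2` and let `x` be
a positive point such that (1) the Hessian `H_x f` has nonnegative off-diagonal entries and is
irreducible (connected incidence graph), (2) `∂ᵢf(x) > 0` for all `i`, and (3) each Hessian
`H_x(∂ᵢf)` has exactly one positive eigenvalue (with multiplicity). Then `H_x f` has exactly one
positive eigenvalue (with multiplicity). -/
theorem lorentzian_bootstrap {n d : ℕ} (hd : 2 ≤ d)
    (f : MvPolynomial (Fin n) ℝ) (hf : f.IsHomogeneous d)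
    (x : Fin n → ℝ) (hx : ∀ i, 0 < x i)
    (hoff : ∀ i j, i ≠ j → 0 ≤ hessAt f x i j)
    (hconn : (SimpleGraph.fromRel fun i j : Fin n => hessAt f x i j ≠ 0).Connected)
    (hgrad : ∀ i, 0 < gradAt f x i)
    (h1 : ∀ (i : Fin n) (hHi : (hessAt (MvPolynomial.pderiv i f) x).IsHermitian),
      (Finset.univ.filter fun j => 0 < hHi.eigenvalues j).card = 1) :
    ∀ (hH : (hessAt f x).IsHermitian),
      (Finset.univ.filter fun i => 0 < hH.eigenvalues i).card = 1 := by
  intro hH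
  have hnn : Nonempty (Fin n) := hconn.nonempty
  -- dispose of the degenerate case d = 2
  rcases eq_or_lt_of_le hd with hd2 | hd3
  · exfalso
    obtain ⟨i⟩ := hnn
    have hfi : (pderiv i f).IsHomogeneous 1 := by
      have := isHomog_pderiv hf i
      rwa [← hd2] at this
    have hQ0 : hessAt (pderiv i f) x = 0 := by
      apply Matrix.ext
      intro j k
      rw [hessAt_apply]
      have hjk : (pderiv k (pderiv i f)).IsHomogeneous 0 := by
        have := isHomog_pderiv hfi k
        simpa using this
      rw [pderiv_eq_zero_of_homog_zero hjk j]
      simp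
    have herm : (hessAt (pderiv i f) x).IsHermitian := hessAt_isHermitian _ _
    have hcard := h1 i herm
    have hzero : ∀ k, herm.eigenvalues k = 0 := by
      intro k
      have key := eig_rayleigh herm k
      set e := ⇑(herm.eigenvectorBasis k) with he
      have hmv := congrArg (fun B : Matrix (Fin n) (Fin n) ℝ => B *ᵥ e) hQ0
      simp only [Matrix.zero_mulVec] at hmv
      rw [hmv, dotProduct_zero] at key
      exact key.symm
    rw [Finset.card_eq_one] at hcard
    obtain ⟨a, ha⟩ := hcard
    have : a ∈ Finset.univ.filter fun j => 0 < herm.eigenvalues j := by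
      rw [ha]; exact Finset.mem_singleton_self a
    rw [Finset.mem_filter] at this
    rw [hzero a] at this
    exact lt_irrefl 0 this.2
  · -- main case : 3 ≤ d
    have hHsym : ∀ i j, hessAt f x i j = hessAt f x j i := fun i j => by
      rw [hessAt_apply, hessAt_apply, my_pderiv_comm]
    set H : Matrix (Fin n) (Fin n) ℝ := hessAt f x with hHdef
    set c1 : ℝ := ((d - 1 : ℕ) : ℝ) with hc1def
    set c2 : ℝ := ((d - 2 : ℕ) : ℝ) with hc2def
    have hc1 : (0:ℝ) < c1 := by
      rw [hc1def]; exact_mod_cast Nat.sub_pos_of_lt (by omega)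
    have hc2 : (0:ℝ) < c2 := by
      rw [hc2def]; exact_mod_cast Nat.sub_pos_of_lt (by omega)
    have hfi : ∀ i, (pderiv i f).IsHomogeneous (d-1) := fun i => isHomog_pderiv hf i
    have hfij : ∀ i j, (pderiv i (pderiv j f)).IsHomogeneous (d-2) := by
      intro i j
      have h := isHomog_pderiv (hfi j) i
      have h21 : d - 1 - 1 = d - 2 := by omega
      rwa [h21] at h
    have HxG : ∀ i, (H *ᵥ x) i = c1 * gradAt f x i := by
      intro i
      have he := euler_eval (pderiv i f) (hfi i) x
      calc (H *ᵥ x) i = ∑ j, H i j * x j := by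
            simp [Matrix.mulVec, dotProduct]
        _ = ∑ j, x j * eval x (pderiv j (pderiv i f)) := by
            refine Finset.sum_congr rfl fun j _ => ?_
            rw [hHdef, hessAt_apply, my_pderiv_comm]
            ring
        _ = c1 * eval x (pderiv i f) := he
        _ = c1 * gradAt f x i := rfl
    set Q : Fin n → Matrix (Fin n) (Fin n) ℝ := fun i => hessAt (pderiv i f) x with hQdef
    have hQherm : ∀ i, (Q i).IsHermitian := fun i => hessAt_isHermitian _ _
    have hQapply : ∀ i j k, Q i j k = eval x (pderiv j (pderiv k (pderiv i f))) :=
      fun i j k => rfl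
    have Qx : ∀ i j, (Q i *ᵥ x) j = c2 * H j i := by
      intro i j
      have he := euler_eval (pderiv j (pderiv i f)) (hfij j i) x
      calc (Q i *ᵥ x) j = ∑ k, Q i j k * x k := by
            simp [Matrix.mulVec, dotProduct]
        _ = ∑ k, x k * eval x (pderiv k (pderiv j (pderiv i f))) := by
            refine Finset.sum_congr rfl fun k _ => ?_
            rw [hQapply, my_pderiv_comm j k (pderiv i f)]
            ring
        _ = c2 * eval x (pderiv j (pderiv i f)) := he
        _ = c2 * H j i := by rw [hHdef, hessAt_apply]
    have xQx : ∀ i, x ⬝ᵥ (Q i *ᵥ x) = c2 * (c1 * gradAt f x i) := by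
      intro i
      calc x ⬝ᵥ (Q i *ᵥ x) = ∑ j, x j * (Q i *ᵥ x) j := by
            simp [dotProduct]
        _ = ∑ j, c2 * (H i j * x j) := by
            refine Finset.sum_congr rfl fun j _ => ?_
            rw [Qx i j, ← hHsym i j]
            try ring
        _ = c2 * ((H *ᵥ x) i) := by
            rw [← Finset.mul_sum]
            congr 1
            try simp [Matrix.mulVec, dotProduct]
        _ = c2 * (c1 * gradAt f x i) := by rw [HxG]
    have xQw : ∀ (i : Fin n) (w : Fin n → ℝ), x ⬝ᵥ (Q i *ᵥ w) = c2 * (H *ᵥ w) i := by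
      intro i w
      rw [dot_mulVec_symm (hQherm i) x w]
      calc w ⬝ᵥ (Q i *ᵥ x) = ∑ j, w j * (Q i *ᵥ x) j := by
            simp [dotProduct]
        _ = ∑ j, c2 * (H i j * w j) := by
            refine Finset.sum_congr rfl fun j _ => ?_
            rw [Qx i j, ← hHsym i j]
            try ring
        _ = c2 * ((H *ᵥ w) i) := by
            rw [← Finset.mul_sum]
            congr 1
            try simp [Matrix.mulVec, dotProduct]
    have sumQ : ∀ j k, ∑ i, x i * Q i j k = c2 * H j k := by
      intro j k
      have he := euler_eval (pderiv j (pderiv k f)) (hfij j k) x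
      calc ∑ i, x i * Q i j k
          = ∑ i, x i * eval x (pderiv i (pderiv j (pderiv k f))) := by
            refine Finset.sum_congr rfl fun i _ => ?_
            rw [hQapply, my_pderiv_comm k i f, my_pderiv_comm j i (pderiv k f)]
        _ = c2 * eval x (pderiv j (pderiv k f)) := he
        _ = c2 * H j k := by rw [hHdef, hessAt_apply]
    -- the key inequality
    have KI : ∀ w : Fin n → ℝ, w ⬝ᵥ (H *ᵥ w) ≤
        ∑ i, (x i / (c1 * gradAt f x i)) * ((H *ᵥ w) i)^2 := by
      intro w
      have hQbound : ∀ i, x i * (w ⬝ᵥ (Q i *ᵥ w)) ≤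
          x i * (c2 * (((H *ᵥ w) i)^2 / (c1 * gradAt f x i))) := by
        intro i
        have hcard := h1 i (hQherm i)
        have huniq : ∀ k l, 0 < (hQherm i).eigenvalues k →
            0 < (hQherm i).eigenvalues l → k = l := by
          intro k l hk hl
          have hle := Finset.card_le_one.mp (le_of_eq hcard)
          exact hle k (by simp [hk]) l (by simp [hl])
        obtain ⟨u, hu⟩ := exists_halfspace (hQherm i) huniq
        have hxQx : 0 < x ⬝ᵥ (Q i *ᵥ x) := by
          rw [xQx]
          have := hgrad i
          positivity
        have hrc := revCS (hQherm i) u hu x w hxQx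
        rw [xQx, xQw] at hrc
        have hGi := hgrad i
        have hwQw : w ⬝ᵥ (Q i *ᵥ w) ≤ c2 * (((H *ᵥ w) i)^2 / (c1 * gradAt f x i)) := by
          rw [mul_div_assoc'] at *
          rw [le_div_iff₀ (by positivity)]
          nlinarith [hrc]
        exact mul_le_mul_of_nonneg_left hwQw (le_of_lt (hx i))
      have hsum : ∑ i, x i * (w ⬝ᵥ (Q i *ᵥ w)) = c2 * (w ⬝ᵥ (H *ᵥ w)) := by
        calc ∑ i, x i * (w ⬝ᵥ (Q i *ᵥ w))
            = ∑ i, ∑ j, ∑ k, w j * w k * (x i * Q i j k) := by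
              refine Finset.sum_congr rfl fun i _ => ?_
              simp only [dotProduct, Matrix.mulVec, Finset.mul_sum]
              exact Finset.sum_congr rfl fun j _ =>
                Finset.sum_congr rfl fun k _ => by ring
          _ = ∑ j, ∑ k, ∑ i, w j * w k * (x i * Q i j k) := by
              rw [Finset.sum_comm]
              exact Finset.sum_congr rfl fun j _ => Finset.sum_comm
          _ = ∑ j, ∑ k, w j * w k * (∑ i, x i * Q i j k) := by
              refine Finset.sum_congr rfl fun j _ => Finset.sum_congr rfl fun k _ => ?_
              rw [Finset.mul_sum]
          _ = ∑ j, ∑ k, w j * w k * (c2 * H j k) := by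
              refine Finset.sum_congr rfl fun j _ => Finset.sum_congr rfl fun k _ => ?_
              rw [sumQ]
          _ = c2 * (w ⬝ᵥ (H *ᵥ w)) := by
              simp only [dotProduct, Matrix.mulVec, Finset.mul_sum]
              exact Finset.sum_congr rfl fun j _ =>
                Finset.sum_congr rfl fun k _ => by ring
      have hle := Finset.sum_le_sum (s := Finset.univ) (fun i _ => hQbound i)
      rw [hsum] at hle
      have hre : ∑ i, x i * (c2 * (((H *ᵥ w) i)^2 / (c1 * gradAt f x i)))
          = c2 * ∑ i, (x i / (c1 * gradAt f x i)) * ((H *ᵥ w) i)^2 := by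
        rw [Finset.mul_sum]
        exact Finset.sum_congr rfl fun i _ => by ring
      rw [hre] at hle
      exact le_of_mul_le_mul_left hle hc2
    -- the rescaled matrix M
    set s : Fin n → ℝ := fun i => Real.sqrt (x i / (c1 * gradAt f x i)) with hsdef
    have hspos : ∀ i, 0 < s i := by
      intro i
      rw [hsdef]
      exact Real.sqrt_pos.mpr (div_pos (hx i) (mul_pos hc1 (hgrad i)))
    have hssq : ∀ i, s i ^ 2 = x i / (c1 * gradAt f x i) := by
      intro i
      rw [hsdef]
      exact Real.sq_sqrt (le_of_lt (div_pos (hx i) (mul_pos hc1 (hgrad i))))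
    set M : Matrix (Fin n) (Fin n) ℝ := Matrix.of (fun i j => s i * H i j * s j) with hMdef
    have hMapply : ∀ i j, M i j = s i * H i j * s j := fun i j => rfl
    have hMsym : ∀ i j, M i j = M j i := by
      intro i j
      rw [hMapply, hMapply, hHsym i j]
      ring
    have hMherm : M.IsHermitian := by
      apply Matrix.ext
      intro i j
      simp only [Matrix.conjTranspose_apply, star_trivial]
      exact hMsym j i
    set v : Fin n → ℝ := fun i => x i / s i with hvdef
    have hvpos : ∀ i, 0 < v i := fun i => div_pos (hx i) (hspos i)
    have hrow : ∀ i, ∑ j, M i j * v j = v i := by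
      intro i
      have hne : c1 * gradAt f x i ≠ 0 := ne_of_gt (mul_pos hc1 (hgrad i))
      calc ∑ j, M i j * v j = ∑ j, s i * (H i j * x j) := by
            refine Finset.sum_congr rfl fun j _ => ?_
            rw [hMapply, hvdef]
            have hsj : s j ≠ 0 := ne_of_gt (hspos j)
            field_simp
        _ = s i * ((H *ᵥ x) i) := by
            rw [← Finset.mul_sum]
            congr 1
        _ = s i * (c1 * gradAt f x i) := by rw [HxG]
        _ = v i := by
            rw [hvdef, eq_div_iff (ne_of_gt (hspos i))]
            calc s i * (c1 * gradAt f x i) * s i = s i ^ 2 * (c1 * gradAt f x i) := by ring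
              _ = (x i / (c1 * gradAt f x i)) * (c1 * gradAt f x i) := by rw [hssq]
              _ = x i := div_mul_cancel₀ _ hne
    have hcol : ∀ j, ∑ i, M i j * v i = v j := by
      intro j
      rw [← hrow j]
      exact Finset.sum_congr rfl fun i _ => by rw [hMsym i j]
    have hconj : ∀ y : Fin n → ℝ,
        (fun i => s i * y i) ⬝ᵥ (H *ᵥ (fun i => s i * y i)) = y ⬝ᵥ (M *ᵥ y) := by
      intro y
      simp only [dotProduct, Matrix.mulVec, hMapply, Finset.mul_sum]
      refine Finset.sum_congr rfl fun i _ => Finset.sum_congr rfl fun j _ => by ring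
    have hMmulVec : ∀ (y : Fin n → ℝ) (i : Fin n),
        (M *ᵥ y) i = s i * ((H *ᵥ (fun j => s j * y j)) i) := by
      intro y i
      simp only [Matrix.mulVec, dotProduct, hMapply, Finset.mul_sum]
      exact Finset.sum_congr rfl fun j _ => by ring
    have hM2 : ∀ y : Fin n → ℝ, y ⬝ᵥ (M *ᵥ y) ≤ ∑ i, ((M *ᵥ y) i)^2 := by
      intro y
      have hKI := KI (fun i => s i * y i)
      rw [hconj y] at hKI
      refine hKI.trans (le_of_eq ?_)
      refine Finset.sum_congr rfl fun i _ => ?_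
      rw [hMmulVec y i, mul_pow, hssq i]
    -- PSD identity
    have htermM : ∀ (t : Fin n → ℝ) (i j : Fin n),
        0 ≤ M i j * v i * v j * (t i - t j)^2 := by
      intro t i j
      rcases eq_or_ne i j with rfl | hij
      · simp
      · have hM0 : 0 ≤ M i j := by
          rw [hMapply]
          exact mul_nonneg (mul_nonneg (le_of_lt (hspos i)) (hoff i j hij))
            (le_of_lt (hspos j))
        exact mul_nonneg (mul_nonneg (mul_nonneg hM0 (le_of_lt (hvpos i)))
          (le_of_lt (hvpos j))) (sq_nonneg _)
    have hPI : ∀ t : Fin n → ℝ,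
        (∑ i, (t i * v i) ^ 2) - (fun i => t i * v i) ⬝ᵥ (M *ᵥ (fun i => t i * v i)) =
        (1/2) * ∑ i, ∑ j, M i j * v i * v j * (t i - t j)^2 := by
      intro t
      have hsplit : ∀ (F G K : Fin n → Fin n → ℝ),
          ∑ i, ∑ j, (F i j - 2 * G i j + K i j) =
          (∑ i, ∑ j, F i j) - 2 * (∑ i, ∑ j, G i j) + (∑ i, ∑ j, K i j) := by
        intro F G K
        simp [Finset.sum_add_distrib, Finset.sum_sub_distrib, Finset.mul_sum]
      have hexp : ∑ i, ∑ j, M i j * v i * v j * (t i - t j)^2 =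
          (∑ i, ∑ j, (M i j * v j) * (v i * t i ^ 2))
          - 2 * (∑ i, ∑ j, (t i * v i) * (M i j * (t j * v j)))
          + (∑ i, ∑ j, (M i j * v i) * (v j * t j ^ 2)) := by
        rw [← hsplit]
        refine Finset.sum_congr rfl fun i _ => Finset.sum_congr rfl fun j _ => by ring
      have hP1 : ∑ i, ∑ j, (M i j * v j) * (v i * t i ^ 2) = ∑ i, (t i * v i)^2 := by
        refine Finset.sum_congr rfl fun i _ => ?_
        rw [← Finset.sum_mul, hrow i]
        ring
      have hP3 : ∑ i, ∑ j, (M i j * v i) * (v j * t j ^ 2) = ∑ j, (t j * v j)^2 := by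
        rw [Finset.sum_comm]
        refine Finset.sum_congr rfl fun j _ => ?_
        rw [← Finset.sum_mul, hcol j]
        ring
      have hP2 : ∑ i, ∑ j, (t i * v i) * (M i j * (t j * v j)) =
          (fun i => t i * v i) ⬝ᵥ (M *ᵥ (fun i => t i * v i)) := by
        simp only [dotProduct, Matrix.mulVec, Finset.mul_sum]
      rw [hexp, hP1, hP2, hP3]
      ring
    have hPSD : ∀ w : Fin n → ℝ, w ⬝ᵥ (M *ᵥ w) ≤ ∑ i, w i ^ 2 := by
      intro w
      have hfun : (fun i => (w i / v i) * v i) = w :=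
        funext fun i => div_mul_cancel₀ _ (ne_of_gt (hvpos i))
      have h := hPI (fun i => w i / v i)
      rw [hfun] at h
      have hsum2 : ∑ i, ((w i / v i) * v i)^2 = ∑ i, w i ^ 2 :=
        Finset.sum_congr rfl fun i _ => by rw [congrFun hfun i]
      have hrhs : 0 ≤ (1/2) * ∑ i, ∑ j, M i j * v i * v j * (w i / v i - w j / v j)^2 :=
        mul_nonneg (by norm_num) (Finset.sum_nonneg fun i _ =>
          Finset.sum_nonneg fun j _ => htermM (fun i => w i / v i) i j)
      linarith [h, hsum2, hrhs]
    have hker : ∀ w : Fin n → ℝ, w ⬝ᵥ (M *ᵥ w) = (∑ i, w i^2) →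
        ∃ c : ℝ, ∀ i, w i = c * v i := by
      intro w hw
      set t : Fin n → ℝ := fun i => w i / v i with htdef
      have hfun : (fun i => t i * v i) = w :=
        funext fun i => div_mul_cancel₀ _ (ne_of_gt (hvpos i))
      have h := hPI t
      rw [hfun] at h
      have hsum2 : ∑ i, (t i * v i)^2 = ∑ i, w i ^ 2 :=
        Finset.sum_congr rfl fun i _ => by rw [congrFun hfun i]
      have hzero : ∑ i, ∑ j, M i j * v i * v j * (t i - t j)^2 = 0 := by
        have h12 : (1/2 : ℝ) * ∑ i, ∑ j, M i j * v i * v j * (t i - t j)^2 = 0 := by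
          linarith [h, hsum2]
        linarith [h12]
      have houter := (Finset.sum_eq_zero_iff_of_nonneg
        (fun i _ => Finset.sum_nonneg (fun j _ => htermM t i j))).mp hzero
      have hinner : ∀ i j : Fin n, M i j * v i * v j * (t i - t j)^2 = 0 := fun i j =>
        (Finset.sum_eq_zero_iff_of_nonneg (fun j _ => htermM t i j)).mp
          (houter i (Finset.mem_univ i)) j (Finset.mem_univ j)
      have hedge : ∀ i j, H i j ≠ 0 → t i = t j := by
        intro i j hij0
        have hz := hinner i j
        have hMne : M i j * v i * v j ≠ 0 := by
          have hM : M i j ≠ 0 := by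
            rw [hMapply]
            exact mul_ne_zero (mul_ne_zero (ne_of_gt (hspos i)) hij0)
              (ne_of_gt (hspos j))
          exact mul_ne_zero (mul_ne_zero hM (ne_of_gt (hvpos i))) (ne_of_gt (hvpos j))
        have hsq : (t i - t j)^2 = 0 := by
          rcases mul_eq_zero.mp hz with hcase | hcase
          · exact absurd hcase hMne
          · exact hcase
        have := pow_eq_zero_iff (n := 2) (by norm_num) |>.mp hsq
        linarith [this]
      have hconst : ∀ i j : Fin n, t i = t j := by
        intro i j
        obtain ⟨p⟩ := hconn.preconnected i j
        refine walk_const ?_ p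
        intro a b hab
        rw [SimpleGraph.fromRel_adj] at hab
        rcases hab.2 with hr | hr
        · exact hedge a b hr
        · exact hedge a b (by rw [hHsym a b]; exact hr)
      obtain ⟨i0⟩ := hnn
      refine ⟨t i0, fun i => ?_⟩
      rw [← congrFun hfun i, hconst i i0]
    -- every positive eigenvalue of M has eigenvector parallel to v
    have hMeig : ∀ k, 0 < hMherm.eigenvalues k →
        ∃ c : ℝ, ∀ i, (⇑(hMherm.eigenvectorBasis k)) i = c * v i := by
      intro k hk
      set e : Fin n → ℝ := ⇑(hMherm.eigenvectorBasis k) with he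
      have hee : e ⬝ᵥ e = 1 := by
        have := eigbasis_dot hMherm k k
        simpa using this
      have heMe : e ⬝ᵥ (M *ᵥ e) = hMherm.eigenvalues k := eig_rayleigh hMherm k
      have hMe : M *ᵥ e = hMherm.eigenvalues k • e := hMherm.mulVec_eigenvectorBasis k
      have hsum_e : ∑ i, e i ^ 2 = 1 := by
        rw [← hee]
        simp [dotProduct, sq]
      have hle1 : hMherm.eigenvalues k ≤ 1 := by
        have := hPSD e
        rw [heMe, hsum_e] at this
        exact this
      have hsq : hMherm.eigenvalues k ≤ hMherm.eigenvalues k ^ 2 := by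
        have h2 := hM2 e
        rw [heMe] at h2
        have h3 : ∑ i, ((M *ᵥ e) i)^2 = hMherm.eigenvalues k ^ 2 := by
          rw [hMe]
          simp only [Pi.smul_apply, smul_eq_mul, mul_pow]
          rw [← Finset.mul_sum, hsum_e, mul_one]
        rw [h3] at h2
        exact h2
      have hl1 : hMherm.eigenvalues k = 1 := by nlinarith
      have heq : e ⬝ᵥ (M *ᵥ e) = ∑ i, e i ^ 2 := by
        rw [heMe, hl1, hsum_e]
      exact hker e heq
    -- the halfspace vector for H
    set u : Fin n → ℝ := fun i => v i / s i with hudef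
    have hu : ∀ z : Fin n → ℝ, u ⬝ᵥ z = 0 → z ⬝ᵥ (H *ᵥ z) ≤ 0 := by
      intro z hz
      set y : Fin n → ℝ := fun i => z i / s i with hydef
      have hzy : (fun i => s i * y i) = z := by
        funext i
        rw [hydef]
        rw [mul_div_assoc', mul_comm, mul_div_assoc, div_self (ne_of_gt (hspos i)), mul_one]
      have hzHz : z ⬝ᵥ (H *ᵥ z) = y ⬝ᵥ (M *ᵥ y) := by
        rw [← hzy]
        exact hconj y
      have hyv : v ⬝ᵥ y = 0 := by
        rw [← hz]
        refine Finset.sum_congr rfl fun i _ => ?_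
        rw [hudef, hydef]
        ring
      rw [hzHz, quadform_expand hMherm y]
      apply Finset.sum_nonpos
      intro k _
      rcases le_or_gt (hMherm.eigenvalues k) 0 with hk | hk
      · exact mul_nonpos_of_nonpos_of_nonneg hk (sq_nonneg _)
      · obtain ⟨c, hc⟩ := hMeig k hk
        have hdz : ⇑(hMherm.eigenvectorBasis k) ⬝ᵥ y = 0 := by
          calc ⇑(hMherm.eigenvectorBasis k) ⬝ᵥ y = ∑ i, (c * v i) * y i :=
                Finset.sum_congr rfl fun i _ => by rw [hc i]
            _ = c * (v ⬝ᵥ y) := by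
                rw [dotProduct, Finset.mul_sum]
                exact Finset.sum_congr rfl fun i _ => by ring
            _ = 0 := by rw [hyv, mul_zero]
        rw [hdz]
        simp
    -- the positivity witness
    have hpos : 0 < x ⬝ᵥ (H *ᵥ x) := by
      have hxHx : x ⬝ᵥ (H *ᵥ x) = ∑ i, x i * (c1 * gradAt f x i) := by
        refine Finset.sum_congr rfl fun i _ => ?_
        rw [HxG i]
      rw [hxHx]
      apply Finset.sum_pos
      · intro i _
        exact mul_pos (hx i) (mul_pos hc1 (hgrad i))
      · exact Finset.univ_nonempty
    exact count_one hH u hu x hpos
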